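/- For all n ≥ 2, r(B(1,n)) = r(S_{n+1}); that is, r(B(1,n)) = 2n+1 if n is odd and 2n+2 if n is even. -/

import Mathlib

open SimpleGraph

/-- The graph of edges of color `b` in the 2-coloring `c` of a complete graph. -/
def colorGraph {V : Type*} (c : Sym2 V → Bool) (b : Bool) : SimpleGraph V :=
  SimpleGraph.fromRel (fun u v => c s(u, v) = b)

/-- `G` occurs as a (not nec. induced) subgraph of `H`. -/
def ContainsCopy {V W : Type*} (G : SimpleGraph V) (H : SimpleGraph W) : Prop :=
  ∃ f : V → W, Function.Injective f ∧ ∀ ⦃u v : V⦄, G.Adj u v → H.Adj (f u) (f v)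

/-- The coloring `c` contains a monochromatic copy of `G`. -/
def HasMonoCopy {V W : Type*} (G : SimpleGraph V) (c : Sym2 W → Bool) : Prop :=
  ∃ b : Bool, ContainsCopy G (colorGraph c b)

/-- The (diagonal) Ramsey number of a graph `G`. -/
noncomputable def ramseyNumber {V : Type*} (G : SimpleGraph V) : ℕ :=
  sInf {r : ℕ | ∀ c : Sym2 (Fin r) → Bool, HasMonoCopy G c}

/-- The star `S n = K_{1,n}`: center `0`, `n` leaves. -/
def starGraph (n : ℕ) : SimpleGraph (Fin (n + 1)) :=
  SimpleGraph.fromRel (fun u v => u = 0)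

/-- The bistar `B(m,n)`: adjacent centers `inl 0`, `inl 1`, with `m` resp. `n` leaves. -/
def bistar (m n : ℕ) : SimpleGraph (Fin 2 ⊕ Fin m ⊕ Fin n) :=
  SimpleGraph.fromRel (fun u v =>
    (u = Sum.inl 0 ∧ v = Sum.inl 1) ∨
    (u = Sum.inl 0 ∧ ∃ i, v = Sum.inr (Sum.inl i)) ∨
    (u = Sum.inl 1 ∧ ∃ j, v = Sum.inr (Sum.inr j)))

/-!
A graph contains `K_{1,n+1}` iff it has a vertex of degree at least `n + 1`. If a graph `H` and
its complement both have maximum degree at most `n`, then `|V| ≤ 2n + 1`, and for odd `n`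
equality would make `H` an `n`-regular graph on an odd number of vertices, contradicting the
handshake lemma; the circulant graphs with jumps `±1, …, ±⌊n/2⌋` on `2n` resp. `2n + 1`
vertices show that these bounds are sharp.

Since `B(1,n)` contains `K_{1,n+1}`, it remains to show that on at least `n + 4` vertices, if
neither `H` nor `Hᶜ` contains `B(1,n)`, then `H` has maximum degree at most `n`. In a
`B(1,n)`-free graph, every neighbour of a vertex of degree `≥ n + 2` is a leaf; applied in `H`
and in `Hᶜ` to two such neighbours this rules out degree `≥ n + 2`. If `v` has degree exactly
`n + 1`, then its closed neighbourhood `S` is closed under adjacency, so a vertex outside `S` has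
degree at most `|V| - n - 3` in `H`, hence degree at least `n + 2` in `Hᶜ`.
-/

open Finset

section Colorings

variable {V W : Type*}

lemma containsCopy_iff_isContained {G : SimpleGraph V} {H : SimpleGraph W} :
    ContainsCopy G H ↔ G ⊑ H :=
  ⟨fun ⟨f, hf, hadj⟩ => ⟨⟨⟨f, fun h => hadj h⟩, hf⟩⟩,
    fun ⟨f⟩ => ⟨f, f.injective, fun _ _ h => f.toHom.map_adj h⟩⟩

@[simp]
lemma colorGraph_adj {c : Sym2 V → Bool} {b : Bool} {u v : V} :
    (colorGraph c b).Adj u v ↔ u ≠ v ∧ c s(u, v) = b := by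
  simp [colorGraph, Sym2.eq_swap]

lemma colorGraph_not (c : Sym2 V → Bool) (b : Bool) :
    colorGraph c (!b) = (colorGraph c b)ᶜ := by
  ext u v
  cases b <;> cases c s(u, v) <;> simp_all

lemma hasMonoCopy_iff {G : SimpleGraph W} {c : Sym2 V → Bool} :
    HasMonoCopy G c ↔ G ⊑ colorGraph c true ∨ G ⊑ (colorGraph c true)ᶜ := by
  simp [HasMonoCopy, containsCopy_iff_isContained, ← colorGraph_not, or_comm]

lemma colorGraph_decide_mem_edgeSet (H : SimpleGraph V) [DecidableRel H.Adj] :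
    colorGraph (fun e => decide (e ∈ H.edgeSet)) true = H := by
  ext u v
  simpa using fun h => h.ne

lemma HasMonoCopy.of_sym2_map {G : SimpleGraph W} {c : Sym2 V → Bool} {U : Type*} (f : U ↪ V)
    (h : HasMonoCopy G (c ∘ Sym2.map f)) : HasMonoCopy G c := by
  obtain ⟨b, hb⟩ := h
  refine ⟨b, containsCopy_iff_isContained.2 ((containsCopy_iff_isContained.1 hb).trans ?_)⟩
  refine ⟨⟨⟨f, fun {u v} huv => ?_⟩, f.injective⟩⟩
  simp only [colorGraph_adj, Function.comp_apply, Sym2.map_mk] at huv ⊢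
  exact ⟨f.injective.ne huv.1, huv.2⟩

lemma ramseyNumber_eq_succ {G : SimpleGraph V} {m : ℕ}
    (hup : ∀ H : SimpleGraph (Fin (m + 1)), G ⊑ H ∨ G ⊑ Hᶜ)
    (hlow : ∃ H : SimpleGraph (Fin m), ¬G ⊑ H ∧ ¬G ⊑ Hᶜ) :
    ramseyNumber G = m + 1 := by
  have hmem : m + 1 ∈ {r : ℕ | ∀ c : Sym2 (Fin r) → Bool, HasMonoCopy G c} :=
    fun c => hasMonoCopy_iff.2 (hup _)
  refine le_antisymm (Nat.sInf_le hmem) (le_csInf ⟨_, hmem⟩ fun r hr => ?_)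
  classical
  obtain ⟨H, hH, hHc⟩ := hlow
  by_contra! hrm
  set f := Fin.castLEEmb (Nat.le_of_lt_succ hrm)
  have hmono := (hr ((fun e => decide (e ∈ H.edgeSet)) ∘ Sym2.map f)).of_sym2_map f
  rw [hasMonoCopy_iff, colorGraph_decide_mem_edgeSet] at hmono
  tauto

end Colorings

section Stars

variable {W : Type*} {H : SimpleGraph W}

lemma starGraph_isContained_iff [Fintype W] [DecidableRel H.Adj] {k : ℕ} :
    _root_.starGraph k ⊑ H ↔ ∃ v, k ≤ H.degree v := by
  change SimpleGraph.starGraph (0 : Fin (k + 1)) ⊑ H ↔ _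
  constructor
  · rintro ⟨f⟩
    exact ⟨f 0, le_of_eq_of_le (by rw [degree_starGraph_center]; simp) (f.degree_le 0)⟩
  · rintro ⟨v, hv⟩
    obtain ⟨f, hf⟩ := Function.Embedding.exists_of_card_le_finset (α := Fin k)
      (s := H.neighborFinset v)
      (by simpa only [Fintype.card_fin, card_neighborFinset_eq_degree] using hv)
    have hadj : ∀ i, H.Adj v (f i) := fun i => by simpa using hf ⟨i, rfl⟩
    refine ⟨⟨⟨Fin.cons v f, fun {x y} hxy => ?_⟩,
      Fin.cons_injective_iff.2 ⟨?_, f.injective⟩⟩⟩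
    · obtain ⟨hne, rfl | rfl⟩ := starGraph_adj.1 hxy
      · cases y using Fin.cases with
        | zero => exact absurd rfl hne
        | succ j => exact hadj j
      · cases x using Fin.cases with
        | zero => exact absurd rfl hne
        | succ j => exact (hadj j).symm
    · rintro ⟨i, hi⟩
      exact (hadj i).ne hi.symm

lemma starGraph_free_iff [Fintype W] [DecidableRel H.Adj] {n : ℕ} :
    ¬_root_.starGraph (n + 1) ⊑ H ↔ ∀ v, H.degree v ≤ n := by
  simp only [starGraph_isContained_iff, not_exists, not_le, Nat.lt_succ_iff]

lemma starGraph_isContained_bistar (n : ℕ) : _root_.starGraph (n + 1) ⊑ bistar 1 n := by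
  set leaves : Fin (n + 1) → Fin 2 ⊕ Fin 1 ⊕ Fin n :=
    Fin.cons (Sum.inl 0) (Sum.inr ∘ Sum.inr)
  have hadj : ∀ j, (bistar 1 n).Adj (Sum.inl 1) (leaves j) := by
    intro j
    cases j using Fin.cases <;> simp [leaves, bistar]
  refine ⟨⟨⟨Fin.cons (Sum.inl 1) leaves, fun {x y} hxy => ?_⟩, ?_⟩⟩
  · obtain ⟨hne, rfl | rfl⟩ := starGraph_adj.1 hxy
    · cases y using Fin.cases with
      | zero => exact absurd rfl hne
      | succ j => exact hadj j
    · cases x using Fin.cases with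
      | zero => exact absurd rfl hne
      | succ j => exact (hadj j).symm
  · refine Fin.cons_injective_iff.2 ⟨?_, Fin.cons_injective_iff.2 ⟨?_, ?_⟩⟩
    · rintro ⟨j, hj⟩
      exact (hadj j).ne hj.symm
    · simp
    · exact Sum.inr_injective.comp Sum.inr_injective

end Stars

-- `r(K_{1,n+1})`: the Ramsey number of the star with `n + 1` leaves
def starRamsey (n : ℕ) : ℕ := if Odd n then 2 * n + 1 else 2 * n + 2

section DegreeBounds

variable {V : Type*} [Fintype V] [DecidableEq V] {H : SimpleGraph V} [DecidableRel H.Adj]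
  {n : ℕ}

lemma degree_add_degree_compl (v : V) : H.degree v + Hᶜ.degree v = Fintype.card V - 1 := by
  have := H.degree_lt_card_verts v
  rw [degree_compl]
  omega

lemma card_lt_of_degree_le (hH : ∀ v, H.degree v ≤ n) (hHc : ∀ v, Hᶜ.degree v ≤ n) :
    Fintype.card V < starRamsey n := by
  unfold starRamsey
  rcases isEmpty_or_nonempty V with hV | ⟨⟨v₀⟩⟩
  · split_ifs <;> simp
  have hcard : Fintype.card V ≤ 2 * n + 1 := by
    have := degree_add_degree_compl (H := H) v₀
    have := hH v₀
    have := hHc v₀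
    omega
  split_ifs with hn
  · refine lt_of_le_of_ne hcard fun hV => ?_
    have hreg : ∀ v, H.degree v = n := fun v => by
      have := degree_add_degree_compl (H := H) v
      have := hH v
      have := hHc v
      omega
    have hsum := H.sum_degrees_eq_twice_card_edges
    simp only [hreg, Finset.sum_const, Finset.card_univ, hV, smul_eq_mul] at hsum
    exact Nat.not_even_iff_odd.2 (Nat.odd_mul.2 ⟨odd_two_mul_add_one n, hn⟩)
      ⟨_, hsum.trans (two_mul _)⟩
  · omega

end DegreeBounds

section Bistar

variable {V : Type*} [Fintype V] [DecidableEq V] {H : SimpleGraph V} [DecidableRel H.Adj]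
  {n : ℕ} {u v w : V}

lemma bistar_isContained_of_adj (huv : H.Adj u v) (huw : H.Adj u w) (hwv : w ≠ v)
    (hn : n ≤ #(H.neighborFinset v \ {u, w})) : bistar 1 n ⊑ H := by
  obtain ⟨f, hf⟩ := Function.Embedding.exists_of_card_le_finset (α := Fin n)
    (s := H.neighborFinset v \ {u, w}) (by simpa using hn)
  have hleaf : ∀ j, H.Adj v (f j) ∧ f j ≠ u ∧ f j ≠ w := fun j => by
    simpa using hf ⟨j, rfl⟩
  refine ⟨⟨⟨Sum.elim ![u, v] (Sum.elim (fun _ => w) f), fun {x y} hxy => ?_⟩, ?_⟩⟩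
  · simp only [bistar, fromRel_adj] at hxy
    obtain ⟨-, h | h⟩ := hxy <;>
      rcases h with ⟨rfl, rfl⟩ | ⟨rfl, i, rfl⟩ | ⟨rfl, j, rfl⟩
    all_goals simp [huv, huv.symm, huw, huw.symm, (hleaf _).1, (hleaf _).1.symm]
  · refine Function.Injective.sumElim ?_ (Function.Injective.sumElim ?_ f.injective ?_) ?_
    · intro a b hab
      fin_cases a <;> fin_cases b <;> simp_all [huv.ne, huv.ne.symm]
    · exact fun _ _ _ => Subsingleton.elim _ _
    · exact fun _ j h => (hleaf j).2.2 h.symm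
    · rintro a (_ | j) <;> fin_cases a
      · simp [huw.ne]
      · simp [hwv.symm]
      · simp [(hleaf j).2.1.symm]
      · simp [(hleaf j).1.ne]

lemma neighborFinset_eq_singleton_of_bistar_free (hfree : ¬bistar 1 n ⊑ H)
    (hv : n + 2 ≤ H.degree v) (hu : H.Adj v u) : H.neighborFinset u = {v} := by
  refine eq_singleton_iff_unique_mem.2 ⟨by simpa using hu.symm, fun w hw => ?_⟩
  by_contra hwv
  refine hfree (bistar_isContained_of_adj hu.symm ((mem_neighborFinset _ _ _).1 hw) hwv ?_)
  calc n ≤ #(H.neighborFinset v) - #{u, w} := by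
        have := card_le_two (a := u) (b := w)
        rw [card_neighborFinset_eq_degree]
        omega
    _ ≤ _ := le_card_sdiff _ _

lemma neighborFinset_subset_insert_of_bistar_free (hfree : ¬bistar 1 n ⊑ H)
    (hv : n + 1 ≤ H.degree v) (hu : H.Adj v u) :
    H.neighborFinset u ⊆ insert v (H.neighborFinset v) := by
  intro w hw
  by_contra hwS
  rw [mem_insert, not_or] at hwS
  refine hfree (bistar_isContained_of_adj hu.symm ((mem_neighborFinset _ _ _).1 hw) hwS.1 ?_)
  calc n ≤ #((H.neighborFinset v).erase u) := by
        rw [card_erase_of_mem (by simpa using hu), card_neighborFinset_eq_degree]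
        omega
    _ ≤ _ := card_le_card fun x hx => by
        simp only [mem_erase, mem_sdiff, mem_insert, mem_singleton, not_or] at hx ⊢
        exact ⟨hx.2, hx.1, fun h => hwS.2 (h ▸ hx.2)⟩

lemma degree_le_succ_of_bistar_free (hfree : ¬bistar 1 n ⊑ H) (hfree' : ¬bistar 1 n ⊑ Hᶜ)
    (hV : n + 4 ≤ Fintype.card V) (v : V) : H.degree v ≤ n + 1 := by
  by_contra! hv
  obtain ⟨u₁, hu₁, u₂, hu₂, hne⟩ := one_lt_card.1
    (by rw [card_neighborFinset_eq_degree]; omega : 1 < #(H.neighborFinset v))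
  rw [mem_neighborFinset] at hu₁ hu₂
  have hN₁ := neighborFinset_eq_singleton_of_bistar_free hfree hv hu₁
  have hN₂ := neighborFinset_eq_singleton_of_bistar_free hfree hv hu₂
  have hdeg : ∀ x, H.neighborFinset x = {v} → Hᶜ.degree x = Fintype.card V - 2 := by
    intro x hx
    rw [degree_compl, ← card_neighborFinset_eq_degree, hx, card_singleton]
    omega
  have hadj : Hᶜ.Adj u₁ u₂ := by
    refine (compl_adj _ _ _).2 ⟨hne, fun h => hu₂.ne' ?_⟩
    simpa [hN₁] using (mem_neighborFinset _ _ _).2 h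
  have hN₂' :=
    neighborFinset_eq_singleton_of_bistar_free hfree' (by rw [hdeg _ hN₁]; omega) hadj
  have := hdeg _ hN₂
  rw [← card_neighborFinset_eq_degree, hN₂', card_singleton] at this
  omega

lemma degree_le_of_bistar_free (hfree : ¬bistar 1 n ⊑ H) (hfree' : ¬bistar 1 n ⊑ Hᶜ)
    (hV : n + 4 ≤ Fintype.card V) (v : V) : H.degree v ≤ n := by
  by_contra! hv
  have hdeg : H.degree v = n + 1 :=
    le_antisymm (degree_le_succ_of_bistar_free hfree hfree' hV v) hv
  set S := insert v (H.neighborFinset v)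
  have hS : #S = n + 2 := by
    rw [card_insert_of_notMem (by simp), card_neighborFinset_eq_degree, hdeg]
  obtain ⟨t, -, ht⟩ := exists_mem_notMem_of_card_lt_card (s := S) (t := univ)
    (by rw [card_univ]; omega)
  have hNt : H.neighborFinset t ⊆ (insert t S)ᶜ := by
    intro x hx
    rw [mem_neighborFinset] at hx
    simp only [mem_compl, mem_insert, not_or]
    refine ⟨hx.ne.symm, fun hxS => ht ?_⟩
    rcases mem_insert.1 hxS with rfl | hxv
    · exact mem_insert_of_mem (by simpa using hx.symm)
    · exact neighborFinset_subset_insert_of_bistar_free hfree hv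
        ((mem_neighborFinset _ _ _).1 hxv) (by simpa using hx.symm)
  have h₁ := card_le_card hNt
  rw [card_compl, card_insert_of_notMem ht, hS, card_neighborFinset_eq_degree] at h₁
  have h₂ := degree_le_succ_of_bistar_free hfree' (by rwa [compl_compl]) hV t
  have h₃ := degree_add_degree_compl (H := H) t
  omega

end Bistar

section Circulant

variable {m : ℕ} [NeZero m]

lemma card_filter_val_le_or_neg_val_le {k : ℕ} (hk : 2 * k < m) :
    #{d : Fin m | d ≠ 0 ∧ (d.val ≤ k ∨ (-d).val ≤ k)} = 2 * k := by
  have hval : ({d : Fin m | d ≠ 0 ∧ (d.val ≤ k ∨ (-d).val ≤ k)} : Finset _).map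
      Fin.valEmbedding = Icc 1 k ∪ Icc (m - k) (m - 1) := by
    ext x
    simp only [mem_map, mem_filter_univ, Fin.valEmbedding_apply, mem_union, mem_Icc, Fin.val_neg]
    constructor
    · rintro ⟨d, ⟨hd, h⟩, rfl⟩
      rw [if_neg hd] at h
      rw [ne_eq, Fin.ext_iff, Fin.val_zero] at hd
      omega
    · intro hx
      refine ⟨⟨x, by omega⟩, ?_, rfl⟩
      simp only [ne_eq, Fin.ext_iff, Fin.val_zero]
      split_ifs <;> omega
  have hdisj : Disjoint (Icc 1 k) (Icc (m - k) (m - 1)) :=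
    disjoint_left.2 fun x hx hx' => by simp only [mem_Icc] at hx hx'; omega
  rw [← card_map, hval, card_union_of_disjoint hdisj, Nat.card_Icc, Nat.card_Icc]
  omega

lemma degree_circulantGraph_val_le {k : ℕ} (hk : 2 * k < m) (v : Fin m) :
    (circulantGraph {d : Fin m | d.val ≤ k}).degree v = 2 * k := by
  rw [← card_neighborFinset_eq_degree, ← card_filter_val_le_or_neg_val_le hk]
  refine card_nbij' (· - v) (v + ·) (fun u hu => ?_) (fun d hd => ?_) (fun u _ => by simp)
    (fun d _ => by simp)
  · simp only [mem_coe, mem_neighborFinset, circulantGraph_adj, mem_filter_univ] at hu ⊢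
    exact ⟨sub_ne_zero.2 (Ne.symm hu.1), by simpa [or_comm] using hu.2⟩
  · simpa [or_comm] using hd

end Circulant

section Ramsey

variable {V : Type*} [Fintype V] {n : ℕ}

lemma starGraph_isContained_or_compl (hV : starRamsey n ≤ Fintype.card V) (H : SimpleGraph V) :
    _root_.starGraph (n + 1) ⊑ H ∨ _root_.starGraph (n + 1) ⊑ Hᶜ := by
  classical
  refine or_iff_not_and_not.2 fun h => ?_
  exact (card_lt_of_degree_le (starGraph_free_iff.1 h.1) (starGraph_free_iff.1 h.2)).not_ge hV

lemma bistar_isContained_or_compl (hn : 2 ≤ n) (hV : starRamsey n ≤ Fintype.card V)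
    (H : SimpleGraph V) : bistar 1 n ⊑ H ∨ bistar 1 n ⊑ Hᶜ := by
  classical
  refine or_iff_not_and_not.2 fun h => ?_
  have hV' : n + 4 ≤ Fintype.card V := by
    simp only [starRamsey, Nat.odd_iff] at hV
    split_ifs at hV <;> omega
  exact (card_lt_of_degree_le (degree_le_of_bistar_free h.1 h.2 hV')
    (degree_le_of_bistar_free h.2 (by rw [compl_compl]; exact h.1) hV')).not_ge hV

lemma exists_starGraph_free_and_compl {m : ℕ} (hm : starRamsey n = m + 1) :
    ∃ H : SimpleGraph (Fin m),
      ¬_root_.starGraph (n + 1) ⊑ H ∧ ¬_root_.starGraph (n + 1) ⊑ Hᶜ := by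
  simp only [starRamsey, Nat.odd_iff] at hm
  have : NeZero m := ⟨by split_ifs at hm <;> omega⟩
  have hk : 2 * (n / 2) < m := by split_ifs at hm <;> omega
  refine ⟨circulantGraph {d : Fin m | d.val ≤ n / 2}, starGraph_free_iff.2 fun v => ?_,
    starGraph_free_iff.2 fun v => ?_⟩
  · rw [degree_circulantGraph_val_le hk]
    omega
  · rw [degree_compl, degree_circulantGraph_val_le hk, Fintype.card_fin]
    split_ifs at hm <;> omega

end Ramsey

theorem bistar_one_n_ramsey (n : ℕ) (hn : 2 ≤ n) :
    ramseyNumber (bistar 1 n) = ramseyNumber (_root_.starGraph (n + 1)) ∧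
    ramseyNumber (bistar 1 n) = if Odd n then 2 * n + 1 else 2 * n + 2 := by
  obtain ⟨m, hm⟩ : ∃ m, starRamsey n = m + 1 :=
    ⟨starRamsey n - 1, by unfold starRamsey; split_ifs <;> omega⟩
  have hV : starRamsey n ≤ Fintype.card (Fin (m + 1)) := by simp [hm]
  obtain ⟨H, hH, hHc⟩ := exists_starGraph_free_and_compl hm
  have hstar : ramseyNumber (_root_.starGraph (n + 1)) = starRamsey n :=
    hm ▸ ramseyNumber_eq_succ (starGraph_isContained_or_compl hV) ⟨H, hH, hHc⟩
  have hbistar : ramseyNumber (bistar 1 n) = starRamsey n :=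
    hm ▸ ramseyNumber_eq_succ (bistar_isContained_or_compl hn hV)
      ⟨H, fun h => hH ((starGraph_isContained_bistar n).trans h),
        fun h => hHc ((starGraph_isContained_bistar n).trans h)⟩
  exact ⟨hbistar.trans hstar.symm, hbistar⟩
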